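/- Semishortening admissibility: let ≺ be any antireflexive binary relation on terms. If Γ ⇒ F{v/r} has a cut-free semishortening derivation in EQ₁₂ (the calculus with all four equality rules =₁, =₂, =₁ˡ, =₂ˡ), then for every term s both Γ, r=s ⇒ F{v/s} and Γ, s=r ⇒ F{v/s} have cut-free semishortening derivations in EQ₁₂. -/

import Mathlib

inductive Tm : Type
  | var : Nat → Tm
  | const : Nat → Tm
  | app : Nat → Tm → Tm

def Tm.subst (v : Nat) (r : Tm) : Tm → Tm
  | .var w => if w = v then r else .var w
  | .const c => .const c
  | .app f t => .app f (Tm.subst v r t)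

def Tm.count (v : Nat) : Tm → Nat
  | .var w => if w = v then 1 else 0
  | .const _ => 0
  | .app _ t => t.count v

inductive Fml : Type
  | eq : Tm → Tm → Fml
  | atom : Nat → Tm → Fml
  | imp : Fml → Fml → Fml
  | and : Fml → Fml → Fml
  | or : Fml → Fml → Fml
  | neg : Fml → Fml
  | all : Nat → Fml → Fml
  | ex : Nat → Fml → Fml

def Fml.subst (v : Nat) (r : Tm) : Fml → Fml
  | .eq t u => .eq (Tm.subst v r t) (Tm.subst v r u)
  | .atom p t => .atom p (Tm.subst v r t)
  | .imp A B => .imp (Fml.subst v r A) (Fml.subst v r B)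
  | .and A B => .and (Fml.subst v r A) (Fml.subst v r B)
  | .or A B => .or (Fml.subst v r A) (Fml.subst v r B)
  | .neg A => .neg (Fml.subst v r A)
  | .all x A => .all x (if x = v then A else Fml.subst v r A)
  | .ex x A => .ex x (if x = v then A else Fml.subst v r A)

def Fml.count (v : Nat) : Fml → Nat
  | .eq t u => t.count v + u.count v
  | .atom _ t => t.count v
  | .imp A B => A.count v + B.count v
  | .and A B => A.count v + B.count v
  | .or A B => A.count v + B.count v
  | .neg A => A.count v
  | .all x A => if x = v then 0 else A.count v
  | .ex x A => if x = v then 0 else A.count v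

/-- Tags for the equality rules of the equational sequent calculi. -/
inductive EqRule | r1 | r2 | l1 | l2 | cng
  deriving DecidableEq

/-- Derivability in the equational sequent calculus.  Sequents have the form
`Γ ⇒ F` with `Γ : List Fml` and `F : Fml`.  The calculus has logical axioms
`F ⇒ F`, reflexivity axioms `⇒ t = t`, the weak left structural rules
(weakening, exchange, contraction), the cut rule (enabled when `cut = true`),
and the equality rules `=₁`, `=₂`, `=₁ˡ`, `=₂ˡ` and `CNG`, each guarded by the
side condition `ok tag F v r s` (where `F` is the changing formula, `v` the
substituted variable and `r`, `s` the terms involved). -/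
inductive Der (ok : EqRule → Fml → Nat → Tm → Tm → Prop) (cut : Bool) :
    List Fml → Fml → Prop
  | ax (F : Fml) : Der ok cut [F] F
  | refl (t : Tm) : Der ok cut [] (.eq t t)
  | wk {Γ H} (F) : Der ok cut Γ H → Der ok cut (F :: Γ) H
  | exch {Γ₁ Γ₂ F G H} : Der ok cut (Γ₁ ++ F :: G :: Γ₂) H →
      Der ok cut (Γ₁ ++ G :: F :: Γ₂) H
  | contr {Γ F H} : Der ok cut (F :: F :: Γ) H → Der ok cut (F :: Γ) H
  | cutr {Γ Λ F H} : cut = true → Der ok cut Γ F → Der ok cut (F :: Λ) H →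
      Der ok cut (Γ ++ Λ) H
  | eq1 {Γ F v r s} : ok .r1 F v r s → Der ok cut Γ (F.subst v r) →
      Der ok cut (.eq r s :: Γ) (F.subst v s)
  | eq2 {Γ F v r s} : ok .r2 F v r s → Der ok cut Γ (F.subst v r) →
      Der ok cut (.eq s r :: Γ) (F.subst v s)
  | eq1l {Γ F v r s H} : ok .l1 F v r s → Der ok cut (F.subst v r :: Γ) H →
      Der ok cut (F.subst v s :: .eq r s :: Γ) H
  | eq2l {Γ F v r s H} : ok .l2 F v r s → Der ok cut (F.subst v r :: Γ) H →
      Der ok cut (F.subst v s :: .eq s r :: Γ) H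
  | cng {Γ Λ F v r s} : ok .cng F v r s → Der ok cut Γ (F.subst v r) →
      Der ok cut Λ (.eq r s) → Der ok cut (Γ ++ Λ) (F.subst v s)

/-- The side condition allowing exactly the equality rules in `tags`,
with no further restriction. -/
def allow (tags : List EqRule) : EqRule → Fml → Nat → Tm → Tm → Prop :=
  fun t _ _ _ _ => t ∈ tags

/-- The semishortening side condition relative to `prec`: `=₁` and `=₁ˡ`
inferences must be shortening (`r ≺ s`), while `=₂` and `=₂ˡ` inferences must
be nonlengthening (`¬ s ≺ r`); `CNG` is not allowed. -/
def semiOk (prec : Tm → Tm → Prop) : EqRule → Fml → Nat → Tm → Tm → Prop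
  | .r1, _, _, r, s => prec r s
  | .l1, _, _, r, s => prec r s
  | .r2, _, _, r, s => ¬ prec s r
  | .l2, _, _, r, s => ¬ prec s r
  | .cng, _, _, _, _ => False


/-!
Induction on the derivation proves a stronger invariant: replacing subterms, simultaneously and
slot by slot, by rewrites that no semishortening equality inference may perform keeps the sequent
derivable once their hypotheses are added; permitted rewrites are then performed by `=₁`/`=₂`
inferences at the end. The reverse of a forbidden rewrite is always
permitted as a left inference with the same hypothesis, since `≺` enters only through `r ≺ s`
versus `s ⊀ r`; this settles the axioms `F ⇒ F`, and congruence settles `⇒ t = t`. At an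
`=₁`/`=₂` inference performing `ν`, a redex overlapping an occurrence of `ν`'s new term is merged
with `ν` into one rewrite of the premise; terms are unary, so overlapping occurrences are nested.
The merged hypothesis is turned back into the two original ones by a left inference for `ν` or
for the reversed redex.
-/

namespace Tm

def apps : List Nat → Tm → Tm
  | [], t => t
  | f :: p, t => .app f (apps p t)

@[simp] theorem apps_nil (t : Tm) : apps [] t = t := rfl

@[simp] theorem apps_cons (f : Nat) (p : List Nat) (t : Tm) :
    apps (f :: p) t = .app f (apps p t) := rfl

theorem apps_append (p q : List Nat) (t : Tm) : apps (p ++ q) t = apps p (apps q t) := by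
  induction p with
  | nil => rfl
  | cons f p ih => simp [ih]

theorem apps_eq_apps {p q : List Nat} {a b : Tm} (h : apps p a = apps q b) :
    (∃ w, a = apps w b ∧ q = p ++ w) ∨ (∃ w, b = apps w a ∧ p = q ++ w) := by
  induction p generalizing q with
  | nil => exact .inl ⟨q, h, rfl⟩
  | cons f p ih =>
    cases q with
    | nil => exact .inr ⟨f :: p, h.symm, rfl⟩
    | cons g q =>
      simp only [apps_cons, app.injEq] at h
      obtain ⟨rfl, h⟩ := h
      rcases ih h with ⟨w, hw, rfl⟩ | ⟨w, hw, rfl⟩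
      exacts [.inl ⟨w, hw, rfl⟩, .inr ⟨w, hw, rfl⟩]

def varBound : Tm → Nat
  | var w => w + 1
  | const _ => 0
  | app _ t => t.varBound

theorem subst_of_varBound_le {v : Nat} {t : Tm} (h : t.varBound ≤ v) (a : Tm) :
    Tm.subst v a t = t := by
  induction t with
  | var w =>
    have : w ≠ v := by simp only [varBound] at h; omega
    simp [Tm.subst, this]
  | const c => rfl
  | app f t ih => simp [Tm.subst, ih h]

@[simp] theorem subst_apps (v : Nat) (a : Tm) (p : List Nat) (t : Tm) :
    Tm.subst v a (apps p t) = apps p (Tm.subst v a t) := by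
  induction p with
  | nil => rfl
  | cons f p ih => simp [Tm.subst, ih]

@[simp] theorem subst_var_self (v : Nat) (a : Tm) : Tm.subst v a (var v) = a := by
  simp [Tm.subst]

theorem subst_cases (v : Nat) (t : Tm) :
    (∀ a, Tm.subst v a t = t) ∨ ∃ p, t = apps p (var v) := by
  induction t with
  | var w =>
    by_cases h : w = v
    · exact .inr ⟨[], by rw [h]; rfl⟩
    · exact .inl fun a => by simp [Tm.subst, h]
  | const c => exact .inl fun a => rfl
  | app f t ih =>
    rcases ih with h | ⟨p, rfl⟩
    · exact .inl fun a => by simp [Tm.subst, h a]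
    · exact .inr ⟨f :: p, rfl⟩

end Tm

/-- Bounds binders as well, since `Fml.subst v` stops at a binder of `v`. -/
def Fml.varBound : Fml → Nat
  | .eq t u => max t.varBound u.varBound
  | .atom _ t => t.varBound
  | .imp A B | .and A B | .or A B => max A.varBound B.varBound
  | .neg A => A.varBound
  | .all x A | .ex x A => max (x + 1) A.varBound

/-- A replacement of `src` by `tgt` licensed by the hypothesis `src = tgt`, or by `tgt = src`
when `rev` holds; the rules `=₁`, `=₁ˡ` use the former, `=₂`, `=₂ˡ` the latter. -/
structure Rewrite where
  src : Tm
  tgt : Tm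
  rev : Bool

namespace Rewrite

def hyp : Rewrite → Fml
  | ⟨r, s, false⟩ => .eq r s
  | ⟨r, s, true⟩ => .eq s r

def symm (ρ : Rewrite) : Rewrite := ⟨ρ.tgt, ρ.src, !ρ.rev⟩

/-- The semishortening condition on an equality inference performing `ρ`. -/
def Oriented (prec : Tm → Tm → Prop) : Rewrite → Prop
  | ⟨r, s, false⟩ => prec r s
  | ⟨r, s, true⟩ => ¬ prec s r

@[simp] theorem symm_src (ρ : Rewrite) : ρ.symm.src = ρ.tgt := rfl

@[simp] theorem symm_tgt (ρ : Rewrite) : ρ.symm.tgt = ρ.src := rfl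

@[simp] theorem hyp_symm (ρ : Rewrite) : ρ.symm.hyp = ρ.hyp := by
  obtain ⟨r, s, _ | _⟩ := ρ <;> rfl

theorem oriented_symm_of_not {prec : Tm → Tm → Prop} {ρ : Rewrite} (h : ¬ ρ.Oriented prec) :
    ρ.symm.Oriented prec := by
  obtain ⟨r, s, _ | _⟩ := ρ
  · exact h
  · exact not_not.mp h

end Rewrite

/-- `u` arises from `t` by replacing at most one subterm occurrence of some `ρ.src`, `ρ ∈ P`,
by `ρ.tgt`; terms are chains of unary applications, so subterms are suffixes. -/
def Rewrites (P : Set Rewrite) (t u : Tm) : Prop :=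
  t = u ∨ ∃ ρ ∈ P, ∃ p, t = Tm.apps p ρ.src ∧ u = Tm.apps p ρ.tgt

namespace Rewrites

theorem refl (P : Set Rewrite) (t : Tm) : Rewrites P t t := .inl rfl

theorem apps {P : Set Rewrite} {ρ : Rewrite} (hρ : ρ ∈ P) (p : List Nat) :
    Rewrites P (Tm.apps p ρ.src) (Tm.apps p ρ.tgt) :=
  .inr ⟨ρ, hρ, p, rfl, rfl⟩

theorem single (ρ : Rewrite) (p : List Nat) :
    Rewrites {ρ} (Tm.apps p ρ.src) (Tm.apps p ρ.tgt) :=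
  apps (Set.mem_singleton ρ) p

theorem mono {P Q : Set Rewrite} (hPQ : P ⊆ Q) {t u : Tm} (h : Rewrites P t u) :
    Rewrites Q t u := by
  rcases h with rfl | ⟨ρ, hρ, p, rfl, rfl⟩
  exacts [refl Q t, apps (hPQ hρ) p]

theorem symm {ρ : Rewrite} {t u : Tm} (h : Rewrites {ρ} t u) : Rewrites {ρ.symm} u t := by
  rcases h with rfl | ⟨σ, rfl, p, rfl, rfl⟩
  exacts [refl _ t, single σ.symm p]

end Rewrites

theorem Relation.ReflTransGen.map₂ {α β γ : Type*} {r : α → α → Prop} {s : β → β → Prop}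
    {q : γ → γ → Prop} {a a' : α} {b b' : β} (ha : ReflTransGen r a a') (f : α → β → γ)
    (h₁ : ∀ a a' b, r a a' → q (f a b) (f a' b)) (h₂ : ∀ a b b', s b b' → q (f a b) (f a b'))
    (hb : ReflTransGen s b b') : ReflTransGen q (f a b) (f a' b') :=
  (ha.lift (f · b) fun _ _ h => h₁ _ _ _ h).trans (hb.lift (f a' ·) fun _ _ h => h₂ _ _ _ h)

inductive Fml.Lift (R : Tm → Tm → Prop) : Fml → Fml → Prop
  | eq {t t' u u'} : R t t' → R u u' → Fml.Lift R (.eq t u) (.eq t' u')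
  | atom (n) {t t'} : R t t' → Fml.Lift R (.atom n t) (.atom n t')
  | imp {A A' B B'} : Fml.Lift R A A' → Fml.Lift R B B' → Fml.Lift R (.imp A B) (.imp A' B')
  | and {A A' B B'} : Fml.Lift R A A' → Fml.Lift R B B' → Fml.Lift R (.and A B) (.and A' B')
  | or {A A' B B'} : Fml.Lift R A A' → Fml.Lift R B B' → Fml.Lift R (.or A B) (.or A' B')
  | neg {A A'} : Fml.Lift R A A' → Fml.Lift R (.neg A) (.neg A')
  | all (x) {A A'} : Fml.Lift R A A' → Fml.Lift R (.all x A) (.all x A')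
  | ex (x) {A A'} : Fml.Lift R A A' → Fml.Lift R (.ex x A) (.ex x A')

namespace Fml.Lift

variable {R S : Tm → Tm → Prop}

theorem refl (hR : ∀ t, R t t) (A : Fml) : Fml.Lift R A A := by
  induction A <;> constructor <;> first | apply hR | assumption

theorem mono (hRS : ∀ t u, R t u → S t u) {A B : Fml} (h : Fml.Lift R A B) : Fml.Lift S A B := by
  induction h <;> constructor <;> first | apply hRS; assumption | assumption

theorem swap {A B : Fml} (h : Fml.Lift R A B) : Fml.Lift (fun t u => R u t) B A := by
  induction h <;> constructor <;> assumption

theorem factor {R₁ R₂ : Tm → Tm → Prop} (hR : ∀ t u, R t u → ∃ z, R₁ t z ∧ R₂ z u)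
    {A B : Fml} (h : Fml.Lift R A B) : ∃ C, Fml.Lift R₁ A C ∧ Fml.Lift R₂ C B := by
  induction h with
  | eq ht hu =>
    obtain ⟨z, hz₁, hz₂⟩ := hR _ _ ht
    obtain ⟨z', hz₁', hz₂'⟩ := hR _ _ hu
    exact ⟨_, .eq hz₁ hz₁', .eq hz₂ hz₂'⟩
  | atom n ht =>
    obtain ⟨z, hz₁, hz₂⟩ := hR _ _ ht
    exact ⟨_, .atom n hz₁, .atom n hz₂⟩
  | imp _ _ ihA ihB =>
    obtain ⟨⟨C, hC₁, hC₂⟩, ⟨D, hD₁, hD₂⟩⟩ := And.intro ihA ihB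
    exact ⟨_, .imp hC₁ hD₁, .imp hC₂ hD₂⟩
  | and _ _ ihA ihB =>
    obtain ⟨⟨C, hC₁, hC₂⟩, ⟨D, hD₁, hD₂⟩⟩ := And.intro ihA ihB
    exact ⟨_, .and hC₁ hD₁, .and hC₂ hD₂⟩
  | or _ _ ihA ihB =>
    obtain ⟨⟨C, hC₁, hC₂⟩, ⟨D, hD₁, hD₂⟩⟩ := And.intro ihA ihB
    exact ⟨_, .or hC₁ hD₁, .or hC₂ hD₂⟩
  | neg _ ih =>
    obtain ⟨C, hC₁, hC₂⟩ := ih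
    exact ⟨_, .neg hC₁, .neg hC₂⟩
  | all x _ ih =>
    obtain ⟨C, hC₁, hC₂⟩ := ih
    exact ⟨_, .all x hC₁, .all x hC₂⟩
  | ex x _ ih =>
    obtain ⟨C, hC₁, hC₂⟩ := ih
    exact ⟨_, .ex x hC₁, .ex x hC₂⟩

open Relation in
theorem reflTransGen {P : Set Rewrite} {A B : Fml} (h : Fml.Lift (Rewrites P) A B) :
    ReflTransGen (fun A B => ∃ ρ ∈ P, Fml.Lift (Rewrites {ρ}) A B) A B := by
  have slot {t u} : Rewrites P t u → ReflTransGen (fun t u => ∃ ρ ∈ P, Rewrites {ρ} t u) t u := by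
    rintro (rfl | ⟨ρ, hρ, p, rfl, rfl⟩)
    exacts [.refl, .single ⟨ρ, hρ, .single ρ p⟩]
  have rfl' (ρ : Rewrite) := Fml.Lift.refl (Rewrites.refl {ρ})
  induction h with
  | eq ht hu =>
    exact (slot ht).map₂ Fml.eq (fun _ _ _ ⟨ρ, hρ, h⟩ => ⟨ρ, hρ, .eq h (.refl _ _)⟩)
      (fun _ _ _ ⟨ρ, hρ, h⟩ => ⟨ρ, hρ, .eq (.refl _ _) h⟩) (slot hu)
  | atom n ht => exact (slot ht).lift _ fun _ _ ⟨ρ, hρ, h⟩ => ⟨ρ, hρ, .atom n h⟩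
  | imp _ _ ihA ihB =>
    exact ihA.map₂ Fml.imp (fun _ _ B ⟨ρ, hρ, h⟩ => ⟨ρ, hρ, .imp h (rfl' ρ B)⟩)
      (fun A _ _ ⟨ρ, hρ, h⟩ => ⟨ρ, hρ, .imp (rfl' ρ A) h⟩) ihB
  | and _ _ ihA ihB =>
    exact ihA.map₂ Fml.and (fun _ _ B ⟨ρ, hρ, h⟩ => ⟨ρ, hρ, .and h (rfl' ρ B)⟩)
      (fun A _ _ ⟨ρ, hρ, h⟩ => ⟨ρ, hρ, .and (rfl' ρ A) h⟩) ihB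
  | or _ _ ihA ihB =>
    exact ihA.map₂ Fml.or (fun _ _ B ⟨ρ, hρ, h⟩ => ⟨ρ, hρ, .or h (rfl' ρ B)⟩)
      (fun A _ _ ⟨ρ, hρ, h⟩ => ⟨ρ, hρ, .or (rfl' ρ A) h⟩) ihB
  | neg _ ih => exact ih.lift _ fun _ _ ⟨ρ, hρ, h⟩ => ⟨ρ, hρ, .neg h⟩
  | all x _ ih => exact ih.lift _ fun _ _ ⟨ρ, hρ, h⟩ => ⟨ρ, hρ, .all x h⟩
  | ex x _ ih => exact ih.lift _ fun _ _ ⟨ρ, hρ, h⟩ => ⟨ρ, hρ, .ex x h⟩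

end Fml.Lift

theorem Rewrites.exists_subst {ρ : Rewrite} {t u : Tm} (h : Rewrites {ρ} t u) {v : Nat}
    (hv : t.varBound ≤ v) : ∃ w, Tm.subst v ρ.src w = t ∧ Tm.subst v ρ.tgt w = u := by
  rcases h with rfl | ⟨σ, rfl, p, rfl, rfl⟩
  · exact ⟨t, Tm.subst_of_varBound_le hv _, Tm.subst_of_varBound_le hv _⟩
  · exact ⟨Tm.apps p (.var v), by simp, by simp⟩

namespace Fml.Lift

theorem exists_subst {ρ : Rewrite} {A B : Fml} (h : Fml.Lift (Rewrites {ρ}) A B) {v : Nat}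
    (hv : A.varBound ≤ v) : ∃ F : Fml, F.subst v ρ.src = A ∧ F.subst v ρ.tgt = B := by
  induction h with
  | eq ht hu =>
    simp only [Fml.varBound, max_le_iff] at hv
    obtain ⟨⟨w, hw⟩, ⟨w', hw'⟩⟩ := And.intro (ht.exists_subst hv.1) (hu.exists_subst hv.2)
    exact ⟨.eq w w', by simp [Fml.subst, hw, hw']⟩
  | atom n ht =>
    obtain ⟨w, hw⟩ := ht.exists_subst hv
    exact ⟨.atom n w, by simp [Fml.subst, hw]⟩
  | imp _ _ ihA ihB =>
    simp only [Fml.varBound, max_le_iff] at hv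
    obtain ⟨⟨F, hF⟩, ⟨G, hG⟩⟩ := And.intro (ihA hv.1) (ihB hv.2)
    exact ⟨.imp F G, by simp [Fml.subst, hF, hG]⟩
  | and _ _ ihA ihB =>
    simp only [Fml.varBound, max_le_iff] at hv
    obtain ⟨⟨F, hF⟩, ⟨G, hG⟩⟩ := And.intro (ihA hv.1) (ihB hv.2)
    exact ⟨.and F G, by simp [Fml.subst, hF, hG]⟩
  | or _ _ ihA ihB =>
    simp only [Fml.varBound, max_le_iff] at hv
    obtain ⟨⟨F, hF⟩, ⟨G, hG⟩⟩ := And.intro (ihA hv.1) (ihB hv.2)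
    exact ⟨.or F G, by simp [Fml.subst, hF, hG]⟩
  | neg _ ih =>
    obtain ⟨F, hF⟩ := ih hv
    exact ⟨.neg F, by simp [Fml.subst, hF]⟩
  | all x _ ih =>
    simp only [Fml.varBound, max_le_iff] at hv
    obtain ⟨F, hF⟩ := ih hv.2
    exact ⟨.all x F, by simp [Fml.subst, show x ≠ v by omega, hF]⟩
  | ex x _ ih =>
    simp only [Fml.varBound, max_le_iff] at hv
    obtain ⟨F, hF⟩ := ih hv.2
    exact ⟨.ex x F, by simp [Fml.subst, show x ≠ v by omega, hF]⟩

theorem subst_of_subst {R S : Tm → Tm → Prop} {v : Nat} {a b : Tm}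
    (hRS : ∀ t u, R t u → S t u) (hsub : ∀ t u, R (Tm.subst v b t) u → S (Tm.subst v a t) u) :
    ∀ {F Y : Fml}, Fml.Lift R (F.subst v b) Y → Fml.Lift S (F.subst v a) Y := by
  intro F
  induction F with
  | eq t u => rintro _ ⟨h₁, h₂⟩; exact .eq (hsub _ _ h₁) (hsub _ _ h₂)
  | atom n t => intro _ h; cases h with | atom _ h => exact .atom n (hsub _ _ h)
  | imp A B ihA ihB => intro _ h; cases h with | imp h₁ h₂ => exact .imp (ihA h₁) (ihB h₂)
  | and A B ihA ihB => intro _ h; cases h with | and h₁ h₂ => exact .and (ihA h₁) (ihB h₂)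
  | or A B ihA ihB => intro _ h; cases h with | or h₁ h₂ => exact .or (ihA h₁) (ihB h₂)
  | neg A ih => intro _ h; cases h with | neg h => exact .neg (ih h)
  | all x A ih =>
    intro _ h
    by_cases hx : x = v
    · simp only [Fml.subst, if_pos hx] at h ⊢
      cases h with | all _ h => exact .all x (h.mono hRS)
    · simp only [Fml.subst, if_neg hx] at h ⊢
      cases h with | all _ h => exact .all x (ih h)
  | ex x A ih =>
    intro _ h
    by_cases hx : x = v
    · simp only [Fml.subst, if_pos hx] at h ⊢
      cases h with | ex _ h => exact .ex x (h.mono hRS)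
    · simp only [Fml.subst, if_neg hx] at h ⊢
      cases h with | ex _ h => exact .ex x (ih h)

end Fml.Lift

theorem Fml.lift_subst (ρ : Rewrite) (v : Nat) (F : Fml) :
    Fml.Lift (Rewrites {ρ}) (F.subst v ρ.src) (F.subst v ρ.tgt) := by
  refine Fml.Lift.subst_of_subst (R := Eq) ?_ ?_ (Fml.Lift.refl (fun _ => rfl) _)
  · rintro t _ rfl
    exact .refl _ t
  · rintro t _ rfl
    rcases Tm.subst_cases v t with h | ⟨p, rfl⟩
    · rw [h, h]
      exact .refl _ t
    · simpa using Rewrites.single ρ p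

namespace Rewrite

theorem lift_hyp_src {π σ : Rewrite} {w : List Nat} (hw : σ.src = Tm.apps w π.src) :
    Fml.Lift (Rewrites {π}) σ.hyp { σ with src := Tm.apps w π.tgt }.hyp := by
  have h : Rewrites {π} σ.src (Tm.apps w π.tgt) := hw ▸ .single π w
  obtain ⟨r, s, _ | _⟩ := σ
  exacts [.eq h (.refl _ _), .eq (.refl _ _) h]

theorem lift_hyp_tgt {π σ : Rewrite} {w : List Nat} (hw : σ.tgt = Tm.apps w π.src) :
    Fml.Lift (Rewrites {π}) σ.hyp { σ with tgt := Tm.apps w π.tgt }.hyp := by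
  have h : Rewrites {π} σ.tgt (Tm.apps w π.tgt) := hw ▸ .single π w
  obtain ⟨r, s, _ | _⟩ := σ
  exacts [.eq (.refl _ _) h, .eq h (.refl _ _)]

end Rewrite

section Structural

variable {ok : EqRule → Fml → Nat → Tm → Tm → Prop} {c : Bool} {Γ Γ' : List Fml} {H : Fml}

theorem Der.perm (hΓ : Γ.Perm Γ') (h : Der ok c Γ H) : Der ok c Γ' H := by
  have key : ∀ Δ, Der ok c (Δ ++ Γ) H → Der ok c (Δ ++ Γ') H := by
    clear h
    induction hΓ with
    | nil => exact fun _ h => h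
    | cons A _ ih => exact fun Δ h => by simpa using ih (Δ ++ [A]) (by simpa using h)
    | swap A B Γ => exact fun _ h => .exch h
    | trans _ _ ih₁ ih₂ => exact fun Δ h => ih₂ Δ (ih₁ Δ h)
  simpa using key [] h

theorem Der.weaken_append (Θ : List Fml) (h : Der ok c Γ H) : Der ok c (Θ ++ Γ) H := by
  induction Θ with
  | nil => exact h
  | cons A Θ ih => exact .wk A ih

theorem Der.contract_append {Θ : List Fml} (h : Der ok c (Θ ++ Γ) H) (hΘ : Θ ⊆ Γ) :
    Der ok c Γ H := by
  classical
  induction Θ with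
  | nil => exact h
  | cons A Θ ih =>
    have hA : Γ.Perm (A :: Γ.erase A) := List.perm_cons_erase (hΘ List.mem_cons_self)
    have h₂ : Der ok c (A :: (Θ ++ Γ.erase A)) H :=
      .contr (h.perm (((hA.append_left Θ).cons A).trans (List.perm_middle.cons A)))
    exact ih (h₂.perm (List.perm_middle.symm.trans (hA.symm.append_left Θ)))
      (List.subset_of_cons_subset hΘ)

theorem Der.of_subset (h : Der ok c Γ H) (hΓ : Γ ⊆ Γ') : Der ok c Γ' H :=
  ((h.weaken_append Γ').perm List.perm_append_comm).contract_append hΓ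

def DerWith (ok : EqRule → Fml → Nat → Tm → Tm → Prop) (c : Bool) (S : Set Fml)
    (Γ : List Fml) (H : Fml) : Prop :=
  ∃ Θ : List Fml, (∀ A ∈ Θ, A ∈ S) ∧ Der ok c (Θ ++ Γ) H

namespace DerWith

variable {S S' : Set Fml}

theorem of_der (h : Der ok c Γ H) : DerWith ok c S Γ H := ⟨[], by simp, h⟩

theorem mono (hS : S ⊆ S') : DerWith ok c S Γ H → DerWith ok c S' Γ H :=
  fun ⟨Θ, hΘ, h⟩ => ⟨Θ, fun A hA => hS (hΘ A hA), h⟩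

theorem frame (hΓ : ∀ Δ, Der ok c (Γ ++ Δ) H → Der ok c (Γ' ++ Δ) H) :
    DerWith ok c S Γ H → DerWith ok c S Γ' H :=
  fun ⟨Θ, hΘ, h⟩ => ⟨Θ, hΘ, (hΓ Θ (h.perm List.perm_append_comm)).perm List.perm_append_comm⟩

theorem absorb {A : Fml} : DerWith ok c (insert A S) Γ H → DerWith ok c S (A :: Γ) H := by
  classical
  rintro ⟨Θ, hΘ, h⟩
  refine ⟨Θ.filter (· ≠ A), fun B hB => ?_, h.of_subset fun B hB => ?_⟩
  · simp only [List.mem_filter, decide_eq_true_eq] at hB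
    exact (hΘ B hB.1).resolve_left hB.2
  · by_cases hBA : B = A <;> simp_all

theorem expand (hS : ∀ A ∈ S, ∀ Δ G, Der ok c (A :: Δ) G → DerWith ok c S' Δ G) :
    DerWith ok c S Γ H → DerWith ok c S' Γ H := by
  rintro ⟨Θ, hΘ, h⟩
  induction Θ generalizing Γ with
  | nil => exact of_der h
  | cons A Θ ih =>
    obtain ⟨Θ', hΘ', h'⟩ := hS A (hΘ A List.mem_cons_self) _ _ h
    obtain ⟨Θ'', hΘ'', h''⟩ := ih (fun B hB => hΘ B (List.mem_cons_of_mem A hB))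
      (h'.perm (by simpa using List.perm_append_comm.append_right Γ))
    exact ⟨Θ'' ++ Θ', by simp_all [or_imp, forall_and], by simpa using h''⟩

end DerWith

end Structural

section Semishortening

variable {prec : Tm → Tm → Prop} {c : Bool} {ρ : Rewrite} {Γ : List Fml} {A B H : Fml}

theorem Der.rewrite_right (hρ : ρ.Oriented prec) (hAB : Fml.Lift (Rewrites {ρ}) A B)
    (h : Der (semiOk prec) c Γ A) : Der (semiOk prec) c (ρ.hyp :: Γ) B := by
  obtain ⟨F, hA, rfl⟩ := hAB.exists_subst le_rfl
  rw [← hA] at h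
  obtain ⟨r, s, _ | _⟩ := ρ
  exacts [.eq1 hρ h, .eq2 hρ h]

theorem Der.rewrite_left (hρ : ρ.Oriented prec) (hAB : Fml.Lift (Rewrites {ρ}) A B)
    (h : Der (semiOk prec) c (A :: Γ) H) : Der (semiOk prec) c (B :: ρ.hyp :: Γ) H := by
  obtain ⟨F, hA, rfl⟩ := hAB.exists_subst le_rfl
  rw [← hA] at h
  obtain ⟨r, s, _ | _⟩ := ρ
  exacts [.eq1l hρ h, .eq2l hρ h]

theorem Der.rewrite_left_of_not_oriented (hρ : ¬ ρ.Oriented prec)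
    (hAB : Fml.Lift (Rewrites {ρ}) A B) (h : Der (semiOk prec) c (B :: Γ) H) :
    Der (semiOk prec) c (A :: ρ.hyp :: Γ) H := by
  simpa using
    Der.rewrite_left (Rewrite.oriented_symm_of_not hρ) (hAB.swap.mono fun _ _ => Rewrites.symm) h

theorem Der.hyp_cong (ρ : Rewrite) (p : List Nat) :
    Der (semiOk prec) c [ρ.hyp] (.eq (Tm.apps p ρ.src) (Tm.apps p ρ.tgt)) := by
  by_cases hρ : ρ.Oriented prec
  · exact Der.rewrite_right hρ (.eq (.refl _ _) (.single ρ p)) (.refl _)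
  · simpa using Der.rewrite_right (Rewrite.oriented_symm_of_not hρ)
      (.eq (.single ρ.symm p) (.refl _ _)) (.refl _)

theorem Der.hyp_cong_symm (ρ : Rewrite) (p : List Nat) :
    Der (semiOk prec) c [ρ.hyp] (.eq (Tm.apps p ρ.tgt) (Tm.apps p ρ.src)) := by
  simpa using Der.hyp_cong ρ.symm p

end Semishortening

section Admissibility

variable {prec : Tm → Tm → Prop}

/-- The induction invariant: `Γ ⇒ A` stays derivable, after adding the hypotheses used, under
simultaneous replacements by rewrites that no semishortening equality inference may perform. -/
def HardAdmissible (prec : Tm → Tm → Prop) (Γ : List Fml) (A : Fml) : Prop :=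
  ∀ P : Set Rewrite, (∀ ρ ∈ P, ¬ ρ.Oriented prec) → ∀ B, Fml.Lift (Rewrites P) A B →
    DerWith (semiOk prec) false (Rewrite.hyp '' P) Γ B

theorem DerWith.rewrite_right {S : Set Fml} {ρ : Rewrite} (hρ : ρ.Oriented prec)
    (hS : ρ.hyp ∈ S) {Γ : List Fml} {A B : Fml} (hAB : Fml.Lift (Rewrites {ρ}) A B) :
    DerWith (semiOk prec) false S Γ A → DerWith (semiOk prec) false S Γ B :=
  fun ⟨Θ, hΘ, h⟩ => ⟨ρ.hyp :: Θ, by simpa [hS] using hΘ, Der.rewrite_right hρ hAB h⟩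

theorem DerWith.rewrite_left_of_not_oriented {S : Set Fml} {ρ : Rewrite} (hρ : ¬ ρ.Oriented prec)
    (hS : ρ.hyp ∈ S) {Γ : List Fml} {A B H : Fml} (hAB : Fml.Lift (Rewrites {ρ}) A B) :
    DerWith (semiOk prec) false S (B :: Γ) H → DerWith (semiOk prec) false S (A :: Γ) H :=
  fun ⟨Θ, hΘ, h⟩ => ⟨ρ.hyp :: Θ, by simpa [hS] using hΘ,
    (Der.rewrite_left_of_not_oriented hρ hAB (h.perm List.perm_middle)).perm
      ((List.Perm.swap _ _ _).trans (List.perm_middle.symm.cons _))⟩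

theorem HardAdmissible.frame {Γ Γ' : List Fml} {A : Fml}
    (hΓ : ∀ Δ B, Der (semiOk prec) false (Γ ++ Δ) B → Der (semiOk prec) false (Γ' ++ Δ) B)
    (h : HardAdmissible prec Γ A) : HardAdmissible prec Γ' A :=
  fun P hP B hB => (h P hP B hB).frame (hΓ · B)

theorem hardAdmissible_ax (A : Fml) : HardAdmissible prec [A] A := by
  intro P hP B hAB
  replace hAB := hAB.reflTransGen
  induction hAB using Relation.ReflTransGen.head_induction_on with
  | refl => exact .of_der (.ax B)
  | head hstep _ ih =>
    obtain ⟨ρ, hρ, hstep⟩ := hstep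
    exact ih.rewrite_left_of_not_oriented (hP ρ hρ) (Set.mem_image_of_mem _ hρ) hstep

theorem hardAdmissible_refl (t : Tm) : HardAdmissible prec [] (.eq t t) := by
  intro P hP B hB
  cases hB with | eq h₁ h₂ => ?_
  have mem {ρ} (hρ : ρ ∈ P) : ρ.hyp ∈ Rewrite.hyp '' P := Set.mem_image_of_mem _ hρ
  rcases h₁ with rfl | ⟨π₁, hπ₁, p₁, rfl, rfl⟩ <;> rcases h₂ with rfl | ⟨π₂, hπ₂, p₂, ht, rfl⟩
  · exact .of_der (.refl _)
  · exact ⟨[π₂.hyp], by simp [mem hπ₂, -Set.mem_image], ht ▸ Der.hyp_cong π₂ p₂⟩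
  · exact ⟨[π₁.hyp], by simp [mem hπ₁, -Set.mem_image], Der.hyp_cong_symm π₁ p₁⟩
  · refine ⟨[π₁.hyp, π₂.hyp], by simp [mem hπ₁, mem hπ₂, -Set.mem_image], ?_⟩
    rcases Tm.apps_eq_apps ht with ⟨w, hw, rfl⟩ | ⟨w, hw, rfl⟩ <;> rw [Tm.apps_append]
    · exact Der.rewrite_left_of_not_oriented (hP π₂ hπ₂) (Rewrite.lift_hyp_src hw)
        (Der.hyp_cong_symm _ p₁)
    · exact (Der.rewrite_left_of_not_oriented (hP π₁ hπ₁) (Rewrite.lift_hyp_src hw)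
        (Der.hyp_cong _ p₂)).perm (.swap _ _ _)

theorem HardAdmissible.derWith {Γ : List Fml} {A B : Fml} {E : Set Rewrite}
    (h : HardAdmissible prec Γ A) (hAB : Fml.Lift (Rewrites E) A B) :
    DerWith (semiOk prec) false (Rewrite.hyp '' E) Γ B := by
  have split (t u : Tm) (htu : Rewrites E t u) : ∃ z,
      Rewrites {ρ ∈ E | ¬ ρ.Oriented prec} t z ∧ Rewrites {ρ ∈ E | ρ.Oriented prec} z u := by
    rcases htu with rfl | ⟨ρ, hρ, p, rfl, rfl⟩
    · exact ⟨t, .refl _ t, .refl _ t⟩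
    · by_cases hρo : ρ.Oriented prec
      · exact ⟨_, .refl _ _, .apps (Set.mem_sep hρ hρo) p⟩
      · exact ⟨_, .apps (Set.mem_sep hρ hρo) p, .refl _ _⟩
  obtain ⟨C, hAC, hCB⟩ := hAB.factor split
  have hC := (h _ (fun ρ hρ => hρ.2) C hAC).mono (Set.image_mono (Set.sep_subset _ _))
  clear hAB
  replace hCB := hCB.reflTransGen
  induction hCB with
  | refl => exact hC
  | tail _ hstep ih =>
    obtain ⟨ρ, hρ, hstep⟩ := hstep
    exact ih.rewrite_right hρ.2 (Set.mem_image_of_mem _ hρ.1) hstep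

/-- Replacing by `P` in the conclusion of an equality inference performing `ν` amounts to
replacing by `Extend P ν` in its premise: a `P`-redex containing (`around`) or contained in
(`inside`) an occurrence of `ν.tgt` is merged with `ν`. -/
inductive Rewrite.Extend (P : Set Rewrite) (ν : Rewrite) : Rewrite → Prop
  | node : Extend P ν ν
  | old {π} : π ∈ P → Extend P ν π
  | around {s b} (w) : ⟨Tm.apps w ν.tgt, s, b⟩ ∈ P → Extend P ν ⟨Tm.apps w ν.src, s, b⟩
  | inside {π} (w) : π ∈ P → ν.tgt = Tm.apps w π.src →
      Extend P ν { ν with tgt := Tm.apps w π.tgt }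

theorem Fml.Lift.subst_extend {P : Set Rewrite} {ν : Rewrite} {v : Nat} {F B : Fml}
    (h : Fml.Lift (Rewrites P) (F.subst v ν.tgt) B) :
    Fml.Lift (Rewrites {ρ | Rewrite.Extend P ν ρ}) (F.subst v ν.src) B := by
  refine Fml.Lift.subst_of_subst (fun _ _ h => h.mono fun _ => .old) (fun t u hu => ?_) h
  rcases Tm.subst_cases v t with ht | ⟨p, rfl⟩
  · rw [ht] at hu ⊢
    exact hu.mono fun _ => .old
  simp only [Tm.subst_apps, Tm.subst_var_self] at hu ⊢
  rcases hu with rfl | ⟨π, hπ, q, hq, rfl⟩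
  · exact .apps .node p
  rcases Tm.apps_eq_apps hq with ⟨w, hw, rfl⟩ | ⟨w, hw, rfl⟩ <;> rw [Tm.apps_append]
  · exact .apps (Rewrite.Extend.inside w hπ hw) p
  · obtain ⟨_, s, b⟩ := π
    subst hw
    exact .apps (Rewrite.Extend.around w hπ) q

theorem Rewrite.Extend.expand {P : Set Rewrite} {ν : Rewrite} (hν : ν.Oriented prec)
    (hP : ∀ ρ ∈ P, ¬ ρ.Oriented prec) :
    ∀ A ∈ Rewrite.hyp '' {ρ | Rewrite.Extend P ν ρ}, ∀ Δ H, Der (semiOk prec) false (A :: Δ) H →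
      DerWith (semiOk prec) false (Rewrite.hyp '' insert ν P) Δ H := by
  have mem {ρ} (hρ : ρ ∈ insert ν P) : ρ.hyp ∈ Rewrite.hyp '' insert ν P :=
    Set.mem_image_of_mem _ hρ
  rintro _ ⟨ρ, hρ, rfl⟩ Δ H h
  cases hρ with
  | node => exact ⟨[ν.hyp], by simp [mem (.inl rfl), -Set.mem_image], h⟩
  | old hπ => exact ⟨[ρ.hyp], by simp [mem (.inr hπ), -Set.mem_image], h⟩
  | around w hπ =>
    exact ⟨[_, ν.hyp], by simp [mem (.inl rfl), mem (.inr hπ), -Set.mem_image],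
      Der.rewrite_left hν (Rewrite.lift_hyp_src rfl) h⟩
  | inside w hπ hw =>
    exact ⟨[ν.hyp, _], by simp [mem (.inl rfl), mem (.inr hπ), -Set.mem_image],
      Der.rewrite_left_of_not_oriented (hP _ hπ) (Rewrite.lift_hyp_tgt hw) h⟩

theorem HardAdmissible.eq_rule {Γ : List Fml} {F : Fml} {v : Nat} {ν : Rewrite}
    (hν : ν.Oriented prec) (h : HardAdmissible prec Γ (F.subst v ν.src)) :
    HardAdmissible prec (ν.hyp :: Γ) (F.subst v ν.tgt) := by
  intro P hP B hB
  have := (h.derWith hB.subst_extend).expand (Rewrite.Extend.expand hν hP)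
  rw [Set.image_insert_eq] at this
  exact this.absorb

theorem Der.hardAdmissible {Γ : List Fml} {A : Fml} (h : Der (semiOk prec) false Γ A) :
    HardAdmissible prec Γ A := by
  induction h with
  | ax A => exact hardAdmissible_ax A
  | refl t => exact hardAdmissible_refl t
  | wk A _ ih => exact ih.frame fun _ _ h => .wk A h
  | exch _ ih => exact ih.frame fun _ _ h => by simpa using Der.exch (by simpa using h)
  | contr _ ih => exact ih.frame fun _ _ h => .contr h
  | cutr hcut => cases hcut
  | eq1 hok _ ih => exact ih.eq_rule (ν := ⟨_, _, false⟩) hok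
  | eq2 hok _ ih => exact ih.eq_rule (ν := ⟨_, _, true⟩) hok
  | eq1l hok _ ih => exact ih.frame fun _ _ h => .eq1l hok h
  | eq2l hok _ ih => exact ih.frame fun _ _ h => .eq2l hok h
  | cng hok => exact hok.elim

theorem Der.rewrite {Γ : List Fml} {F : Fml} {v : Nat} {ρ : Rewrite}
    (h : Der (semiOk prec) false Γ (F.subst v ρ.src)) :
    Der (semiOk prec) false (ρ.hyp :: Γ) (F.subst v ρ.tgt) := by
  obtain ⟨Θ, hΘ, h'⟩ := h.hardAdmissible.derWith (Fml.lift_subst ρ v F)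
  exact h'.of_subset fun A hA => by
    rcases List.mem_append.mp hA with hA | hA
    · exact List.mem_cons.mpr (.inl (by simpa using hΘ A hA))
    · exact List.mem_cons_of_mem _ hA

end Admissibility

theorem semishortening_admissibility_general (prec : Tm → Tm → Prop)
    (Γ : List Fml) (F : Fml) (v : Nat) (r : Tm)
    (h : Der (semiOk prec) false Γ (F.subst v r)) :
    ∀ s : Tm,
      Der (semiOk prec) false (.eq r s :: Γ) (F.subst v s) ∧
      Der (semiOk prec) false (.eq s r :: Γ) (F.subst v s) :=
  fun s => ⟨Der.rewrite (ρ := ⟨r, s, false⟩) h, Der.rewrite (ρ := ⟨r, s, true⟩) h⟩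

/-- Semishortening admissibility: for any antireflexive relation `≺` on terms
(`r ≺ s` entails `s ⊀ r`), if `Γ ⇒ F{v/r}` has a cut-free semishortening
derivation in `EQ₁₂`, then for every term `s` both `Γ, r=s ⇒ F{v/s}` and
`Γ, s=r ⇒ F{v/s}` have cut-free semishortening derivations. -/
theorem semishortening_admissibility (prec : Tm → Tm → Prop)
    (hprec : ∀ r s, prec r s → ¬ prec s r)
    (Γ : List Fml) (F : Fml) (v : Nat) (r : Tm)
    (h : Der (semiOk prec) false Γ (F.subst v r)) :
    ∀ s : Tm,
      Der (semiOk prec) false (.eq r s :: Γ) (F.subst v s) ∧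
      Der (semiOk prec) false (.eq s r :: Γ) (F.subst v s) :=
  semishortening_admissibility_general prec Γ F v r h
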